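/- Let X be a real m×n matrix, B a real m×m symmetric positive definite matrix, s > 0, and E symmetric n×n with ‖E‖₂ ≤ s/10. If R is invertible with RᵀR = XᵀBX + sI + E, then ‖B^{1/2}XR⁻¹‖₂ ≤ 1.5. -/

import Mathlib

/-!
Writing `M = B^{1/2} X R⁻¹`, the Cholesky-type identity gives the Gram matrix
`Mᵀ M = I - R⁻ᵀ (sI + E) R⁻¹`. Since `‖E‖₂ ≤ s`, the matrix `sI + E` has a nonnegative quadratic
form, so `‖M v‖² = ‖v‖² - ⟪R⁻¹v, (sI + E) R⁻¹v⟫ ≤ ‖v‖²`, i.e. `‖M‖₂ ≤ 1`.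
-/

open Matrix BigOperators

noncomputable def spec {m n : ℕ} (A : Matrix (Fin m) (Fin n) ℝ) : ℝ :=
  ‖LinearMap.toContinuousLinearMap (Matrix.toEuclideanLin A)‖

noncomputable def frob {m n : ℕ} (A : Matrix (Fin m) (Fin n) ℝ) : ℝ :=
  Real.sqrt (∑ i, ∑ j, (A i j)^2)

noncomputable def sigmaMin {m n : ℕ} (A : Matrix (Fin m) (Fin n) ℝ) : ℝ :=
  ⨅ x : {x : EuclideanSpace ℝ (Fin n) // ‖x‖ = 1}, ‖Matrix.toEuclideanLin A x‖

noncomputable def lamMin {n : ℕ} (A : Matrix (Fin n) (Fin n) ℝ) : ℝ :=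
  ⨅ x : {x : EuclideanSpace ℝ (Fin n) // ‖x‖ = 1},
    (inner ℝ (Matrix.toEuclideanLin A x) (x : EuclideanSpace ℝ (Fin n)) : ℝ)

noncomputable def lamMax {n : ℕ} (A : Matrix (Fin n) (Fin n) ℝ) : ℝ :=
  ⨆ x : {x : EuclideanSpace ℝ (Fin n) // ‖x‖ = 1},
    (inner ℝ (Matrix.toEuclideanLin A x) (x : EuclideanSpace ℝ (Fin n)) : ℝ)

noncomputable def Matrix.PosSemidef.sqrt {m : ℕ} {A : Matrix (Fin m) (Fin m) ℝ} (hA : A.PosSemidef) :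
    Matrix (Fin m) (Fin m) ℝ :=
  hA.1.eigenvectorUnitary.1 * diagonal ((↑) ∘ Real.sqrt ∘ hA.1.eigenvalues) *
    (star hA.1.eigenvectorUnitary : Matrix (Fin m) (Fin m) ℝ)

section PosSemidefSqrt

variable {m : ℕ} {A : Matrix (Fin m) (Fin m) ℝ}

lemma Matrix.PosSemidef.transpose_sqrt (hA : A.PosSemidef) : hA.sqrtᵀ = hA.sqrt := by
  rw [Matrix.PosSemidef.sqrt, star_eq_conjTranspose, conjTranspose_eq_transpose_of_trivial,
    transpose_mul, transpose_mul, transpose_transpose, diagonal_transpose, Matrix.mul_assoc]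

lemma Matrix.PosSemidef.sqrt_mul_self (hA : A.PosSemidef) : hA.sqrt * hA.sqrt = A := by
  have hD : diagonal ((↑) ∘ Real.sqrt ∘ hA.1.eigenvalues : Fin m → ℝ) *
      diagonal ((↑) ∘ Real.sqrt ∘ hA.1.eigenvalues) =
        diagonal (RCLike.ofReal ∘ hA.1.eigenvalues) := by
    rw [diagonal_mul_diagonal]
    congr 1
    funext i
    simp [Real.mul_self_sqrt (hA.eigenvalues_nonneg i)]
  conv_rhs => rw [hA.1.spectral_theorem, Unitary.conjStarAlgAut_apply]
  rw [Matrix.PosSemidef.sqrt, ← hD]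
  simp only [Matrix.mul_assoc]
  rw [← Matrix.mul_assoc (star _ : Matrix (Fin m) (Fin m) ℝ) _ (diagonal _ * _),
    Unitary.coe_star_mul_self, Matrix.one_mul]

end PosSemidefSqrt

lemma Matrix.transpose_inv_mul_mul_inv_eq_one_sub {n α : Type*} [Fintype n] [DecidableEq n]
    [CommRing α] {R G C : Matrix n n α} (hR : IsUnit R) (h : Rᵀ * R = G + C) :
    R⁻¹ᵀ * G * R⁻¹ = 1 - R⁻¹ᵀ * C * R⁻¹ := by
  have hdet : IsUnit R.det := (isUnit_iff_isUnit_det R).mp hR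
  have hRR : R⁻¹ᵀ * (Rᵀ * R) * R⁻¹ = 1 := by
    rw [transpose_nonsing_inv, ← Matrix.mul_assoc, nonsing_inv_mul _ (by rwa [det_transpose]),
      Matrix.one_mul, mul_nonsing_inv _ hdet]
  rw [eq_sub_of_add_eq h.symm, Matrix.mul_sub, Matrix.sub_mul, hRR]

section EuclideanOperator

variable {m n k : ℕ}

lemma inner_toEuclideanLin_transpose (A : Matrix (Fin m) (Fin n) ℝ) (x : EuclideanSpace ℝ (Fin n))
    (y : EuclideanSpace ℝ (Fin m)) :
    inner ℝ x (toEuclideanLin Aᵀ y) = inner ℝ (toEuclideanLin A x) y := by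
  rw [← conjTranspose_eq_transpose_of_trivial, toEuclideanLin_conjTranspose_eq_adjoint]
  exact LinearMap.adjoint_inner_right _ x y

lemma inner_toEuclideanLin_transpose_mul_mul (A : Matrix (Fin m) (Fin n) ℝ)
    (C : Matrix (Fin m) (Fin m) ℝ) (v : EuclideanSpace ℝ (Fin n)) :
    inner ℝ v (toEuclideanLin (Aᵀ * C * A) v) =
      inner ℝ (toEuclideanLin A v) (toEuclideanLin C (toEuclideanLin A v)) := by
  rw [Matrix.mul_assoc, toLpLin_mul_same, LinearMap.comp_apply, inner_toEuclideanLin_transpose,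
    toLpLin_mul_same, LinearMap.comp_apply]

lemma norm_toEuclideanLin_le_spec_mul (A : Matrix (Fin m) (Fin n) ℝ)
    (v : EuclideanSpace ℝ (Fin n)) :
    ‖toEuclideanLin A v‖ ≤ spec A * ‖v‖ :=
  (LinearMap.toContinuousLinearMap (toEuclideanLin A)).le_opNorm v

lemma inner_toEuclideanLin_smul_one_add_nonneg {E : Matrix (Fin n) (Fin n) ℝ} {s : ℝ}
    (hEs : spec E ≤ s) (w : EuclideanSpace ℝ (Fin n)) :
    0 ≤ inner ℝ w (toEuclideanLin (s • 1 + E) w) := by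
  have hE : |inner ℝ w (toEuclideanLin E w)| ≤ s * ‖w‖ ^ 2 :=
    calc |inner ℝ w (toEuclideanLin E w)|
        ≤ ‖w‖ * ‖toEuclideanLin E w‖ := abs_real_inner_le_norm _ _
      _ ≤ ‖w‖ * (s * ‖w‖) := by
          gcongr
          exact (norm_toEuclideanLin_le_spec_mul E w).trans (by gcongr)
      _ = s * ‖w‖ ^ 2 := by ring
  simp only [map_add, _root_.map_smul, LinearMap.add_apply, LinearMap.smul_apply, toLpLin_one,
    LinearMap.id_apply, inner_add_right, real_inner_smul_right, real_inner_self_eq_norm_sq]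
  linarith [(abs_le.mp hE).1]

lemma spec_le_one_of_transpose_mul_self_eq {M : Matrix (Fin m) (Fin n) ℝ}
    {N : Matrix (Fin k) (Fin n) ℝ} {C : Matrix (Fin k) (Fin k) ℝ}
    (hC : ∀ w, 0 ≤ inner ℝ w (toEuclideanLin C w)) (hM : Mᵀ * M = 1 - Nᵀ * C * N) :
    spec M ≤ 1 := by
  refine ContinuousLinearMap.opNorm_le_bound _ zero_le_one fun v => ?_
  have hsq : ‖toEuclideanLin M v‖ ^ 2 ≤ ‖v‖ ^ 2 :=
    calc ‖toEuclideanLin M v‖ ^ 2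
        = inner ℝ v (toEuclideanLin (Mᵀ * M) v) := by
          rw [toLpLin_mul_same, LinearMap.comp_apply, inner_toEuclideanLin_transpose,
            real_inner_self_eq_norm_sq]
      _ = ‖v‖ ^ 2 - inner ℝ (toEuclideanLin N v) (toEuclideanLin C (toEuclideanLin N v)) := by
          rw [hM, map_sub, LinearMap.sub_apply, inner_sub_right,
            inner_toEuclideanLin_transpose_mul_mul, toLpLin_one, LinearMap.id_apply,
            real_inner_self_eq_norm_sq]
      _ ≤ ‖v‖ ^ 2 := sub_le_self _ (hC _)
  simpa using pow_le_pow_iff_left₀ (norm_nonneg _) (norm_nonneg _) two_ne_zero |>.mp hsq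

end EuclideanOperator

theorem stmt14_general {m n : ℕ} (X : Matrix (Fin m) (Fin n) ℝ)
    (B : Matrix (Fin m) (Fin m) ℝ) (hB : B.PosDef)
    (s : ℝ) (hs : 0 < s) (E : Matrix (Fin n) (Fin n) ℝ)
    (hEs : spec E ≤ s / 10) (R : Matrix (Fin n) (Fin n) ℝ) (hRunit : IsUnit R)
    (hchol : Rᵀ * R = Xᵀ * B * X + s • (1 : Matrix (Fin n) (Fin n) ℝ) + E) :
    spec (hB.posSemidef.sqrt * X * R⁻¹) ≤ 1.5 := by
  have hgram : (hB.posSemidef.sqrt * X * R⁻¹)ᵀ * (hB.posSemidef.sqrt * X * R⁻¹) =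
      1 - R⁻¹ᵀ * (s • 1 + E) * R⁻¹ := by
    rw [← transpose_inv_mul_mul_inv_eq_one_sub hRunit (by rw [hchol, add_assoc])]
    conv_rhs => rw [← hB.posSemidef.sqrt_mul_self]
    simp only [transpose_mul, hB.posSemidef.transpose_sqrt, Matrix.mul_assoc]
  calc spec (hB.posSemidef.sqrt * X * R⁻¹)
      ≤ 1 := spec_le_one_of_transpose_mul_self_eq
        (inner_toEuclideanLin_smul_one_add_nonneg (hEs.trans (by linarith))) hgram
    _ ≤ 1.5 := by norm_num

theorem stmt14 {m n : ℕ} (X : Matrix (Fin m) (Fin n) ℝ)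
    (B : Matrix (Fin m) (Fin m) ℝ) (hB : B.PosDef)
    (s : ℝ) (hs : 0 < s) (E : Matrix (Fin n) (Fin n) ℝ) (hE : Eᵀ = E)
    (hEs : spec E ≤ s / 10) (R : Matrix (Fin n) (Fin n) ℝ) (hRunit : IsUnit R)
    (hchol : Rᵀ * R = Xᵀ * B * X + s • (1 : Matrix (Fin n) (Fin n) ℝ) + E) :
    spec (hB.posSemidef.sqrt * X * R⁻¹) ≤ 1.5 :=
  stmt14_general X B hB s hs E hEs R hRunit hchol
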